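/- arXiv:1504.07502 — 4 statements merged into one kernel-verified Lean document; each statement's English description precedes it below -/
import Mathlib

section
/- Let V be a real inner product space of even dimension 2ℓ and let Q be the quadratic form Q(v) = -‖v‖² on V. Then there exists a ℂ-algebra isomorphism between the complexified Clifford algebra Cl(V) ⊗_ℝ ℂ (the Clifford algebra over ℂ of the base change of Q to ℂ ⊗_ℝ V) and the algebra of 2^ℓ × 2^ℓ complex matrices; equivalently, Cl(V) ⊗_ℝ ℂ ≅ End_ℂ(S) for a complex vector space S of dimension 2^ℓ. -/
/-!
Choosing an orthonormal basis of `V` and scaling it by `i` identifies `Q ⊗ ℂ` with the sum of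
squares on `ℂ^{2ℓ}`. For a sum of squares we split off two coordinates at a time. If `u` is an
even element of `Cl(Q₂)` with `u² = 1` that anticommutes with the vectors of `Q₂`, then
`(v, w) ↦ v ⊗ u + 1 ⊗ w` identifies `Cl(Q₁ ⊕ Q₂)` with the ordinary (ungraded) tensor product
`Cl(Q₁) ⊗ Cl(Q₂)`; on the plane `u = i e₁e₂` works. The Clifford algebra of the complex plane is
the split quaternion algebra `ℍ[ℂ,1,0,1] ≅ M₂(ℂ)`, so by induction
`Cl(ℂ^{2ℓ}) ≅ M₂(ℂ)^{⊗ℓ} ≅ M_{2^ℓ}(ℂ)`.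
-/

open TensorProduct CliffordAlgebra QuadraticMap

open scoped Quaternion

noncomputable section

namespace CliffordAlgebra

variable {R M₁ M₂ : Type*} [CommRing R] [AddCommGroup M₁] [Module R M₁] [AddCommGroup M₂]
  [Module R M₂] {Q₁ : QuadraticForm R M₁} {Q₂ : QuadraticForm R M₂}

theorem commute_of_commute_ι {A : Type*} [Ring A] [Algebra R A]
    {f : CliffordAlgebra Q₁ →ₐ[R] A} {g : CliffordAlgebra Q₂ →ₐ[R] A}
    (h : ∀ v w, Commute (f (ι Q₁ v)) (g (ι Q₂ w))) (x : CliffordAlgebra Q₁)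
    (y : CliffordAlgebra Q₂) : Commute (f x) (g y) := by
  induction x using CliffordAlgebra.induction with
  | algebraMap r => simpa only [AlgHom.commutes] using Algebra.commute_algebraMap_left r _
  | ι v =>
    induction y using CliffordAlgebra.induction with
    | algebraMap r => simpa only [AlgHom.commutes] using Algebra.commute_algebraMap_right r _
    | ι w => exact h v w
    | mul a b ha hb => rw [map_mul]; exact ha.mul_right hb
    | add a b ha hb => rw [map_add]; exact ha.add_right hb
  | mul a b ha hb => rw [map_mul]; exact ha.mul_left hb
  | add a b ha hb => rw [map_add]; exact ha.add_left hb

section TensorSplitting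

variable (Q₁) {u : CliffordAlgebra Q₂}

theorem commute_map_inr_ι_inl (heven : u ∈ evenOdd Q₂ 0) (v : M₁) :
    Commute (map (QuadraticMap.Isometry.inr Q₁ Q₂) u) (ι (Q₁.prod Q₂) (v, 0)) := by
  simpa only [map_apply_ι, QuadraticMap.Isometry.inl_apply] using
    commute_map_mul_map_of_isOrtho_of_mem_evenOdd_zero_left (QuadraticMap.Isometry.inr Q₁ Q₂)
      (QuadraticMap.Isometry.inl Q₁ Q₂) (fun _ _ => QuadraticMap.IsOrtho.inr_inl _ _) u (ι Q₁ v)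
      heven (ι_mem_evenOdd_one Q₁ v)

variable (hu : u * u = 1) (hanti : ∀ w, u * ι Q₂ w = -(ι Q₂ w * u))
  (heven : u ∈ evenOdd Q₂ 0)

def prodToTensor :
    CliffordAlgebra (Q₁.prod Q₂) →ₐ[R] CliffordAlgebra Q₁ ⊗[R] CliffordAlgebra Q₂ :=
  lift _ ⟨((TensorProduct.mk R _ _).flip u ∘ₗ ι Q₁).coprod
      (Algebra.TensorProduct.includeRight.toLinearMap ∘ₗ ι Q₂), fun ⟨v, w⟩ => by
    simp only [LinearMap.coprod_apply, LinearMap.coe_comp, Function.comp_apply,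
      LinearMap.flip_apply, TensorProduct.mk_apply, AlgHom.toLinearMap_apply,
      Algebra.TensorProduct.includeRight_apply, add_mul, mul_add,
      Algebra.TensorProduct.tmul_mul_tmul, one_mul, mul_one, hu, ι_sq_scalar,
      QuadraticMap.prod_apply, map_add]
    rw [hanti, TensorProduct.tmul_neg, add_assoc, add_neg_cancel_left,
      Algebra.TensorProduct.algebraMap_apply, Algebra.TensorProduct.algebraMap_apply']⟩

theorem prodToTensor_ι (v : M₁) (w : M₂) :
    prodToTensor Q₁ hu hanti (ι _ (v, w)) = ι Q₁ v ⊗ₜ u + 1 ⊗ₜ ι Q₂ w :=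
  lift_ι_apply _ _ _

def tensorToProd :
    CliffordAlgebra Q₁ ⊗[R] CliffordAlgebra Q₂ →ₐ[R] CliffordAlgebra (Q₁.prod Q₂) :=
  let ũ := map (QuadraticMap.Isometry.inr Q₁ Q₂) u
  Algebra.TensorProduct.lift
    (lift Q₁ ⟨LinearMap.mulRight R ũ ∘ₗ ι _ ∘ₗ LinearMap.inl R M₁ M₂, fun v => by
      simp only [LinearMap.coe_comp, Function.comp_apply, LinearMap.inl_apply,
        LinearMap.mulRight_apply]
      rw [mul_assoc, ← mul_assoc ũ, (commute_map_inr_ι_inl Q₁ heven v).eq, mul_assoc _ ũ,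
        ← map_mul, hu, map_one, mul_one, ι_sq_scalar, QuadraticMap.prod_apply,
        map_zero, add_zero]⟩)
    (map (QuadraticMap.Isometry.inr Q₁ Q₂))
    (commute_of_commute_ι fun v w => by
      have hũ : ũ * ι _ (0, w) = -(ι _ (0, w) * ũ) := by
        simpa only [map_mul, map_neg, map_apply_ι, QuadraticMap.Isometry.inr_apply]
          using congrArg (map (QuadraticMap.Isometry.inr Q₁ Q₂)) (hanti w)
      simp only [lift_ι_apply, LinearMap.coe_comp, Function.comp_apply, LinearMap.inl_apply,
        LinearMap.mulRight_apply, map_apply_ι, QuadraticMap.Isometry.inr_apply]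
      rw [Commute, SemiconjBy, mul_assoc, hũ, mul_neg, ← mul_assoc,
        ι_mul_ι_comm_of_isOrtho (QuadraticMap.IsOrtho.inl_inr v w), neg_mul, neg_neg, mul_assoc])

theorem prodToTensor_map_inr (y : CliffordAlgebra Q₂) :
    prodToTensor Q₁ hu hanti (map (QuadraticMap.Isometry.inr Q₁ Q₂) y) = 1 ⊗ₜ y := by
  induction y using CliffordAlgebra.induction with
  | algebraMap r => rw [AlgHom.commutes, AlgHom.commutes, Algebra.TensorProduct.algebraMap_apply']
  | ι w => simp [prodToTensor_ι]
  | mul a b ha hb => rw [map_mul, map_mul, ha, hb, Algebra.TensorProduct.tmul_mul_tmul, one_mul]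
  | add a b ha hb => rw [map_add, map_add, ha, hb, tmul_add]

theorem tensorToProd_ι_tmul (v : M₁) (y : CliffordAlgebra Q₂) :
    tensorToProd Q₁ hu hanti heven (ι Q₁ v ⊗ₜ y) =
      ι _ (v, 0) * map (QuadraticMap.Isometry.inr Q₁ Q₂) (u * y) := by
  simp [tensorToProd, mul_assoc]

theorem tensorToProd_one_tmul (y : CliffordAlgebra Q₂) :
    tensorToProd Q₁ hu hanti heven (1 ⊗ₜ y) = map (QuadraticMap.Isometry.inr Q₁ Q₂) y := by
  simp [tensorToProd]

theorem tensorToProd_comp_prodToTensor :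
    (tensorToProd Q₁ hu hanti heven).comp (prodToTensor Q₁ hu hanti) = AlgHom.id R _ := by
  ext v <;> dsimp
  · rw [prodToTensor_ι, map_zero, tmul_zero, add_zero, tensorToProd_ι_tmul, hu, map_one, mul_one]
  · rw [prodToTensor_ι, map_zero, zero_tmul, zero_add, tensorToProd_one_tmul, map_apply_ι,
      QuadraticMap.Isometry.inr_apply]

theorem prodToTensor_comp_tensorToProd :
    (prodToTensor Q₁ hu hanti).comp (tensorToProd Q₁ hu hanti heven) = AlgHom.id R _ := by
  ext v <;> dsimp <;> simp only [AlgebraTensorModule.mk_apply, LinearMap.coe_mk, AddHom.coe_mk]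
  · rw [tensorToProd_ι_tmul, mul_one, map_mul, prodToTensor_ι, prodToTensor_map_inr, map_zero,
      tmul_zero, add_zero, Algebra.TensorProduct.tmul_mul_tmul, mul_one, hu]
  · rw [tensorToProd_one_tmul, prodToTensor_map_inr]

def prodEquivTensor :
    CliffordAlgebra (Q₁.prod Q₂) ≃ₐ[R] CliffordAlgebra Q₁ ⊗[R] CliffordAlgebra Q₂ :=
  AlgEquiv.ofAlgHom _ _ (prodToTensor_comp_tensorToProd Q₁ hu hanti heven)
    (tensorToProd_comp_prodToTensor Q₁ hu hanti heven)

end TensorSplitting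

end CliffordAlgebra

namespace QuaternionAlgebra

variable (K : Type*) [Field K]

def matrixBasis : QuaternionAlgebra.Basis (Matrix (Fin 2) (Fin 2) K) (1 : K) 0 1 where
  i := !![1, 0; 0, -1]
  j := !![0, 1; 1, 0]
  k := !![0, 1; -1, 0]
  i_mul_i := by ext i j; fin_cases i <;> fin_cases j <;> simp
  j_mul_j := by ext i j; fin_cases i <;> fin_cases j <;> simp
  i_mul_j := by ext i j; fin_cases i <;> fin_cases j <;> simp
  j_mul_i := by ext i j; fin_cases i <;> fin_cases j <;> simp

theorem matrixBasis_liftHom_surjective [NeZero (2 : K)] :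
    Function.Surjective (matrixBasis K).liftHom := by
  intro M
  refine ⟨⟨(M 0 0 + M 1 1) / 2, (M 0 0 - M 1 1) / 2, (M 0 1 + M 1 0) / 2, (M 0 1 - M 1 0) / 2⟩,
    ?_⟩
  ext i j
  fin_cases i <;> fin_cases j <;>
    simp [matrixBasis, Basis.liftHom, Basis.lift, Matrix.algebraMap_matrix_apply] <;>
    field_simp <;> ring

def equivMatrix [NeZero (2 : K)] : ℍ[K,1,0,1] ≃ₐ[K] Matrix (Fin 2) (Fin 2) K :=
  AlgEquiv.ofBijective (matrixBasis K).liftHom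
    ⟨((matrixBasis K).liftHom.toLinearMap.injective_iff_surjective_of_finrank_eq_finrank
      (by simp [finrank_eq_four, Module.finrank_matrix])).2 (matrixBasis_liftHom_surjective K),
     matrixBasis_liftHom_surjective K⟩

end QuaternionAlgebra

namespace CliffordAlgebraQuaternion

variable {R : Type*} [CommRing R] {c₁ c₂ : R}

theorem quaternionBasis_k_mul_k :
    (quaternionBasis c₁ c₂).k * (quaternionBasis c₁ c₂).k = algebraMap R _ (-(c₁ * c₂)) :=
  CliffordAlgebraQuaternion.equiv.injective <| by
    ext <;> simp

theorem quaternionBasis_k_mul_ι (v : R × R) :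
    (quaternionBasis c₁ c₂).k * ι (Q c₁ c₂) v =
      -(ι (Q c₁ c₂) v * (quaternionBasis c₁ c₂).k) :=
  CliffordAlgebraQuaternion.equiv.injective <| by
    ext <;> simp

theorem quaternionBasis_k_mem_evenOdd_zero :
    (quaternionBasis c₁ c₂).k ∈ evenOdd (Q c₁ c₂) 0 :=
  ι_mul_ι_mem_evenOdd_zero _ _ _

end CliffordAlgebraQuaternion

namespace Matrix

def finOneAlgEquiv (R : Type*) [CommRing R] : R ≃ₐ[R] Matrix (Fin 1) (Fin 1) R :=
  AlgEquiv.ofBijective (Algebra.ofId R _)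
    ⟨fun a b h => by simpa [algebraMap_matrix_apply] using congrFun₂ h 0 0,
     fun M => ⟨M 0 0, by
      ext i j; simp [Subsingleton.elim i 0, Subsingleton.elim j 0, algebraMap_matrix_apply]⟩⟩

def kroneckerFinTwoAlgEquiv (R : Type*) [CommRing R] (k : ℕ) :
    Matrix (Fin (2 ^ k)) (Fin (2 ^ k)) R ⊗[R] Matrix (Fin 2) (Fin 2) R ≃ₐ[R]
      Matrix (Fin (2 ^ (k + 1))) (Fin (2 ^ (k + 1))) R :=
  (kroneckerAlgEquiv _ _ R).trans <|
    reindexAlgEquiv R R (finProdFinEquiv.trans (finCongr (pow_succ 2 k).symm))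

end Matrix

namespace QuadraticForm

section SumSq

variable (R : Type*) [CommRing R]

abbrev sumSq (n : ℕ) : QuadraticForm R (Fin n → R) :=
  weightedSumSquares R (1 : Fin n → R)

def sumSqZeroIsometryEquiv : (sumSq R 0).IsometryEquiv (0 : QuadraticForm R Unit) where
  toLinearEquiv := LinearEquiv.ofSubsingleton _ _
  map_app' _ := by simp

def sumSqAddTwoIsometryEquiv (n : ℕ) :
    (sumSq R (n + 2)).IsometryEquiv ((sumSq R n).prod (CliffordAlgebraQuaternion.Q 1 1)) where
  toLinearEquiv := (LinearEquiv.funCongrLeft R R finSumFinEquiv).trans <|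
    (LinearEquiv.sumArrowLequivProdArrow _ _ R R).trans <|
      (LinearEquiv.refl R _).prodCongr (LinearEquiv.piFinTwo R fun _ => R)
  map_app' x := by
    simp [Fin.sum_univ_add, LinearEquiv.funCongrLeft]

end SumSq

theorem isOrthoᵢ_baseChange {R A M ι : Type*} [CommRing R] [CommRing A] [Algebra R A]
    [AddCommGroup M] [Module R M] [Invertible (2 : R)] [Invertible (2 : A)]
    {Q : QuadraticForm R M} {b : Module.Basis ι R M} (h : (associated Q).IsOrthoᵢ b) :
    (associated (Q.baseChange A)).IsOrthoᵢ (Algebra.TensorProduct.basis A b) := by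
  intro i j hij
  change associated (Q.baseChange A) _ _ = 0
  rw [associated_baseChange, Algebra.TensorProduct.basis_apply, Algebra.TensorProduct.basis_apply,
    LinearMap.BilinForm.baseChange_tmul, h hij, zero_smul]

theorem nonempty_isometryEquiv_baseChange_sumSq {M : Type*} [AddCommGroup M] [Module ℝ M]
    {n : ℕ} {Q : QuadraticForm ℝ M} (b : Module.Basis (Fin n) ℝ M) (hb : (associated Q).IsOrthoᵢ b)
    (hQb : ∀ i, Q (b i) = -1) : Nonempty ((Q.baseChange ℂ).IsometryEquiv (sumSq ℂ n)) := by
  let bc := Algebra.TensorProduct.basis ℂ b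
  have hrepr : (Q.baseChange ℂ).basisRepr bc = weightedSumSquares ℂ fun _ => (-1 : ℂ) := by
    rw [basisRepr_eq_of_iIsOrtho _ _ (isOrthoᵢ_baseChange hb)]
    simp [Algebra.TensorProduct.basis_apply, hQb]
  exact ⟨(isometryEquivBasisRepr _ bc).trans <| hrepr ▸
    isometryEquivWeightedSumSquaresWeightedSumSquares
      (fun _ => Units.mk0 Complex.I Complex.I_ne_zero) (by simp)⟩

theorem associated_eq_neg_inner {V : Type*} [NormedAddCommGroup V] [InnerProductSpace ℝ V]
    {Q : QuadraticForm ℝ V} (hQ : ∀ v, Q v = -‖v‖ ^ 2) (v w : V) :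
    associated (R := ℝ) Q v w = -inner ℝ v w := by
  rw [associated_apply, hQ, hQ, hQ, norm_add_sq_real]
  norm_num
  ring

theorem nonempty_isometryEquiv_baseChange_sumSq_of_eq_neg_norm_sq {V : Type*}
    [NormedAddCommGroup V] [InnerProductSpace ℝ V] [FiniteDimensional ℝ V] {n : ℕ}
    (hdim : Module.finrank ℝ V = n) {Q : QuadraticForm ℝ V} (hQ : ∀ v, Q v = -‖v‖ ^ 2) :
    Nonempty ((Q.baseChange ℂ).IsometryEquiv (sumSq ℂ n)) := by
  let b := (stdOrthonormalBasis ℝ V).reindex (finCongr hdim)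
  refine nonempty_isometryEquiv_baseChange_sumSq b.toBasis (fun i j hij => ?_) fun i => ?_
  · change associated Q (b.toBasis i) (b.toBasis j) = 0
    rw [associated_eq_neg_inner hQ, OrthonormalBasis.coe_toBasis, b.orthonormal.2 hij, neg_zero]
  · rw [OrthonormalBasis.coe_toBasis, hQ, b.orthonormal.1 i, one_pow]

end QuadraticForm

namespace CliffordAlgebraQuaternion

def iVolume : CliffordAlgebra (Q (1 : ℂ) 1) := Complex.I • (quaternionBasis 1 1).k

theorem iVolume_mul_self : iVolume * iVolume = 1 := by
  rw [iVolume, smul_mul_smul_comm, quaternionBasis_k_mul_k, Complex.I_mul_I]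
  simp

theorem iVolume_mul_ι (v : ℂ × ℂ) : iVolume * ι _ v = -(ι _ v * iVolume) := by
  rw [iVolume, smul_mul_assoc, quaternionBasis_k_mul_ι, mul_smul_comm, smul_neg]

theorem iVolume_mem_evenOdd_zero : iVolume ∈ evenOdd (Q (1 : ℂ) 1) 0 :=
  Submodule.smul_mem _ _ quaternionBasis_k_mem_evenOdd_zero

end CliffordAlgebraQuaternion

open CliffordAlgebraQuaternion in
def CliffordAlgebra.sumSqEquivMatrix :
    ∀ k : ℕ, CliffordAlgebra (QuadraticForm.sumSq ℂ (2 * k)) ≃ₐ[ℂ]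
      Matrix (Fin (2 ^ k)) (Fin (2 ^ k)) ℂ
  | 0 => ((equivOfIsometry (QuadraticForm.sumSqZeroIsometryEquiv ℂ)).trans
      CliffordAlgebraRing.equiv).trans (Matrix.finOneAlgEquiv ℂ)
  | k + 1 => (equivOfIsometry (QuadraticForm.sumSqAddTwoIsometryEquiv ℂ (2 * k))).trans <|
      (prodEquivTensor _ iVolume_mul_self iVolume_mul_ι iVolume_mem_evenOdd_zero).trans <|
      (Algebra.TensorProduct.congr (sumSqEquivMatrix k)
        (CliffordAlgebraQuaternion.equiv.trans (QuaternionAlgebra.equivMatrix ℂ))).trans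
      (Matrix.kroneckerFinTwoAlgEquiv ℂ k)

/-- **Existence of the spinor module** (Proposition 5.1, existence part).
If `V` is a real inner product space of even dimension `2ℓ` and `Q v = -‖v‖²`,
then the complexified Clifford algebra `Cl(V) ⊗ ℂ` is isomorphic, as a
`ℂ`-algebra, to the algebra of `2^ℓ × 2^ℓ` complex matrices, i.e. to
`End_ℂ(S)` for a complex vector space `S` of dimension `2^ℓ`. -/
theorem spinor_module_exists
    (V : Type*) [NormedAddCommGroup V] [InnerProductSpace ℝ V] [FiniteDimensional ℝ V]
    (ℓ : ℕ) (hdim : Module.finrank ℝ V = 2 * ℓ)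
    (Q : QuadraticForm ℝ V) (hQ : ∀ v : V, Q v = -‖v‖ ^ 2) :
    Nonempty (CliffordAlgebra (Q.baseChange ℂ) ≃ₐ[ℂ]
      Matrix (Fin (2 ^ ℓ)) (Fin (2 ^ ℓ)) ℂ) := by
  obtain ⟨e⟩ := QuadraticForm.nonempty_isometryEquiv_baseChange_sumSq_of_eq_neg_norm_sq hdim hQ
  exact ⟨(equivOfIsometry e).trans (sumSqEquivMatrix ℓ)⟩
end
end

section
/- Let V be a real inner product space of even dimension 2ℓ, Q(v) = -‖v‖², A = Cl(V) ⊗ ℂ, and let S be an A-module, finite-dimensional over ℂ, whose structure homomorphism A → End_ℂ(S) is bijective. Then there exists a positive-definite Hermitian inner product h on S such that for every v ∈ V the Clifford action c(v) (the action on S of the element ι(v) ∈ Cl(V) ⊆ Cl(V) ⊗ ℂ) is skew-adjoint, i.e. h(c(v)s, t) = -h(s, c(v)t) for all s, t ∈ S. Moreover any two positive-definite Hermitian inner products with this property differ by a positive real scalar. -/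
open TensorProduct

/-- A positive-definite Hermitian inner product `h` on a module `S` over the
complexified Clifford algebra `Cl(V) ⊗ ℂ` (conjugate-linear in the first slot,
Hermitian-symmetric, positive definite) for which each Clifford action
`c(v) = ι(1 ⊗ v) • ·`, `v ∈ V`, is skew-adjoint. -/
def IsSkewAdjointHermitianInner
    {V : Type*} [NormedAddCommGroup V] [InnerProductSpace ℝ V]
    (Q : QuadraticForm ℝ V)
    (S : Type*) [AddCommGroup S] [Module ℂ S]
    [Module (CliffordAlgebra (Q.baseChange ℂ)) S]
    (h : S → S → ℂ) : Prop :=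
  (∀ s t u : S, h (s + t) u = h s u + h t u) ∧
  (∀ (c : ℂ) (s t : S), h (c • s) t = (starRingEnd ℂ) c * h s t) ∧
  (∀ s t : S, h t s = (starRingEnd ℂ) (h s t)) ∧
  (∀ s : S, s ≠ 0 → 0 < (h s s).re) ∧
  (∀ (v : V) (s t : S),
    h ((CliffordAlgebra.ι (Q.baseChange ℂ) ((1 : ℂ) ⊗ₜ[ℝ] v)) • s) t =
      - h s ((CliffordAlgebra.ι (Q.baseChange ℂ) ((1 : ℂ) ⊗ₜ[ℝ] v)) • t))

/-!
Existence: start from any positive-definite Hermitian form and average it successively over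
`{1, c(eᵢ)}` for an orthonormal basis `(eᵢ)` of `V`. Since `c(eᵢ)² = -1` and the `c(eᵢ)`
anticommute, the result is invariant under every `c(eᵢ)`, so each `c(eᵢ)`, and by linearity each
`c(v)`, is skew-adjoint.

Uniqueness: if every `c(v)` is skew-adjoint for `h`, the `h`-adjoint of the action of
`a ∈ Cl(V) ⊗ ℂ` is the action of an element depending on `a` alone (reverse the products,
conjugate the scalars, negate the vectors). As `Cl(V) ⊗ ℂ → End_ℂ(S)` is onto, two such forms
`h, h'` have the same adjoints. For the rank-one operator `s ↦ h(y, s) x` this gives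
`h(s, y) h'(x, t) = h(x, t) h'(s, y)`, and taking `x = t ≠ 0` shows `h' = r h`.
-/

open ComplexConjugate

section HermitianForm

variable {S : Type*} [AddCommGroup S] [Module ℂ S]

def IsHermitianPosDef (B : S →ₗ⋆[ℂ] S →ₗ[ℂ] ℂ) : Prop :=
  B.IsSymm ∧ ∀ s, s ≠ 0 → 0 < (B s s).re

namespace IsHermitianPosDef

variable {B : S →ₗ⋆[ℂ] S →ₗ[ℂ] ℂ}

theorem re_nonneg (hB : IsHermitianPosDef B) (s : S) : 0 ≤ (B s s).re := by
  rcases eq_or_ne s 0 with rfl | hs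
  · simp
  · exact (hB.2 s hs).le

theorem ofReal_re_apply_self (hB : IsHermitianPosDef B) (s : S) : ((B s s).re : ℂ) = B s s :=
  Complex.conj_eq_iff_re.mp (hB.1.eq s s)

theorem eq_of_forall_apply_eq (hB : IsHermitianPosDef B) {x y : S}
    (h : ∀ s, B s x = B s y) : x = y := by
  by_contra hne
  have := hB.2 (x - y) (sub_ne_zero.mpr hne)
  simp [h] at this

theorem add_comp_compl₂_self (hB : IsHermitianPosDef B) (f : Module.End ℂ S) :
    IsHermitianPosDef (B + (B.comp f).compl₂ f) := by
  refine ⟨⟨fun s t => ?_⟩, fun s hs => ?_⟩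
  · simp [hB.1.eq]
  · simpa using add_pos_of_pos_of_nonneg (hB.2 s hs) (hB.re_nonneg (f s))

end IsHermitianPosDef

theorem isHermitianPosDef_innerₛₗ_comp_compl₂ {E : Type*} [NormedAddCommGroup E]
    [InnerProductSpace ℂ E] (f : S →ₗ[ℂ] E) (hf : Function.Injective f) :
    IsHermitianPosDef (((innerₛₗ ℂ).comp f).compl₂ f) :=
  ⟨⟨fun s t => by simp⟩, fun s hs => by
    simpa using (re_inner_self_pos (𝕜 := ℂ)).mpr ((map_ne_zero_iff f hf).mpr hs)⟩

theorem exists_isHermitianPosDef [FiniteDimensional ℂ S] :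
    ∃ B : S →ₗ⋆[ℂ] S →ₗ[ℂ] ℂ, IsHermitianPosDef B :=
  let e := LinearEquiv.ofFinrankEq S (EuclideanSpace ℂ (Fin (Module.finrank ℂ S))) (by simp)
  ⟨_, isHermitianPosDef_innerₛₗ_comp_compl₂ e.toLinearMap e.injective⟩

end HermitianForm

section Averaging

variable {S : Type*} [AddCommGroup S] [Module ℂ S] {ι : Type*}
  (B : S →ₗ⋆[ℂ] S →ₗ[ℂ] ℂ) (f : ι → Module.End ℂ S)

def averageForm : List ι → (S →ₗ⋆[ℂ] S →ₗ[ℂ] ℂ)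
  | [] => B
  | i :: l => averageForm l + ((averageForm l).comp (f i)).compl₂ (f i)

variable {B f}

theorem isHermitianPosDef_averageForm (hB : IsHermitianPosDef B) :
    ∀ l : List ι, IsHermitianPosDef (averageForm B f l)
  | [] => hB
  | _ :: l => (isHermitianPosDef_averageForm hB l).add_comp_compl₂_self _

/-- For `j = i`, `f i² = -1` swaps the two summands of the last averaging step (the sign cancels);
for `j ≠ i`, anticommutation moves `f j` past `f i` and the inductive hypothesis applies. -/
theorem averageForm_apply_apply_of_mem (hsq : ∀ i, f i * f i = -1)
    (hanti : ∀ i j, i ≠ j → f i * f j = -(f j * f i)) :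
    ∀ l : List ι, ∀ j ∈ l, ∀ s t : S,
      averageForm B f l (f j s) (f j t) = averageForm B f l s t
  | i :: l, j, hj, s, t => by
    have hsq' (s : S) : f i (f i s) = -s := by
      simpa using LinearMap.congr_fun (hsq i) s
    by_cases hji : j = i
    · subst hji
      simp only [averageForm, LinearMap.add_apply, LinearMap.compl₂_apply,
        LinearMap.comp_apply, hsq', map_neg, LinearMap.neg_apply, neg_neg]
      ring
    · have hjl : j ∈ l := (List.mem_cons.mp hj).resolve_left hji
      have hanti' (s : S) : f i (f j s) = -f j (f i s) := by
        simpa using LinearMap.congr_fun (hanti i j (Ne.symm hji)) s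
      simp only [averageForm, LinearMap.add_apply, LinearMap.compl₂_apply,
        LinearMap.comp_apply, hanti', map_neg, LinearMap.neg_apply, neg_neg,
        averageForm_apply_apply_of_mem hsq hanti l j hjl]

theorem apply_apply_eq_neg_of_invariant {g : Module.End ℂ S} (hg : g * g = -1)
    (hinv : ∀ s t, B (g s) (g t) = B s t) (s t : S) : B (g s) t = -B s (g t) := by
  have ht : g (g (-t)) = t := by simpa using LinearMap.congr_fun hg (-t)
  calc B (g s) t = B (g s) (g (g (-t))) := by rw [ht]
    _ = -B s (g t) := by rw [hinv, map_neg, map_neg]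

theorem IsHermitianPosDef.exists_forall_skew [Fintype ι] (hB : IsHermitianPosDef B)
    (hsq : ∀ i, f i * f i = -1) (hanti : ∀ i j, i ≠ j → f i * f j = -(f j * f i)) :
    ∃ B' : S →ₗ⋆[ℂ] S →ₗ[ℂ] ℂ, IsHermitianPosDef B' ∧
      ∀ i s t, B' (f i s) t = -B' s (f i t) :=
  ⟨averageForm B f Finset.univ.toList, isHermitianPosDef_averageForm hB _, fun i =>
    apply_apply_eq_neg_of_invariant (hsq i)
      (averageForm_apply_apply_of_mem hsq hanti _ i (Finset.mem_toList.mpr (Finset.mem_univ i)))⟩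

end Averaging

section Uniqueness

variable {S : Type*} [AddCommGroup S] [Module ℂ S] {B B' : S →ₗ⋆[ℂ] S →ₗ[ℂ] ℂ}

/-- Expand the `B'`-adjointness of the `B`-adjoint rank-one pair `s ↦ B y s • x`,
`t ↦ B x t • y`. -/
theorem apply_mul_apply_eq_of_isAdjointPair_imp (hB : B.IsSymm)
    (hadj : ∀ E F : Module.End ℂ S, (∀ s t, B (E s) t = B s (F t)) →
      ∀ s t, B' (E s) t = B' s (F t)) (x y s t : S) :
    B s y * B' x t = B x t * B' s y := by
  have h := hadj ((B y).smulRight x) ((B x).smulRight y)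
    (fun s t => by simp [hB.eq y s, mul_comm]) s t
  simpa [hB.eq y s] using h

theorem IsHermitianPosDef.exists_pos_eq_smul_of_isAdjointPair_imp (hB : IsHermitianPosDef B)
    (hB' : IsHermitianPosDef B')
    (hadj : ∀ E F : Module.End ℂ S, (∀ s t, B (E s) t = B s (F t)) →
      ∀ s t, B' (E s) t = B' s (F t)) :
    ∃ r : ℝ, 0 < r ∧ ∀ s t, B' s t = r * B s t := by
  rcases subsingleton_or_nontrivial S with hS | hS
  · exact ⟨1, one_pos, fun s t => by simp [Subsingleton.elim s 0]⟩
  obtain ⟨x, hx⟩ := exists_ne (0 : S)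
  refine ⟨(B' x x).re / (B x x).re, div_pos (hB'.2 x hx) (hB.2 x hx), fun s t => ?_⟩
  have hBx : (B x x : ℂ) ≠ 0 := fun h => by simpa [h] using hB.2 x hx
  have key := apply_mul_apply_eq_of_isAdjointPair_imp hB.1 hadj x t s x
  rw [Complex.ofReal_div, hB.ofReal_re_apply_self, hB'.ofReal_re_apply_self,
    div_mul_eq_mul_div, eq_div_iff hBx]
  linear_combination -key

end Uniqueness

theorem QuadraticForm.baseChange_one_tmul {R A M : Type*} [CommRing R] [CommRing A] [Algebra R A]
    [AddCommGroup M] [Module R M] [Invertible (2 : R)] (Q : QuadraticForm R M) (m : M) :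
    Q.baseChange A ((1 : A) ⊗ₜ[R] m) = algebraMap R A (Q m) := by
  rw [baseChange_tmul, mul_one, Algebra.algebraMap_eq_smul_one]

section Clifford

variable {V : Type*} [AddCommGroup V] [Module ℝ V] (Q : QuadraticForm ℝ V)

noncomputable def cliffordVec : V →ₗ[ℝ] CliffordAlgebra (Q.baseChange ℂ) :=
  ((CliffordAlgebra.ι (Q.baseChange ℂ)).restrictScalars ℝ).comp (TensorProduct.mk ℝ ℂ V 1)

theorem cliffordVec_apply (v : V) :
    cliffordVec Q v = CliffordAlgebra.ι (Q.baseChange ℂ) ((1 : ℂ) ⊗ₜ[ℝ] v) :=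
  rfl

theorem cliffordVec_mul_self (v : V) :
    cliffordVec Q v * cliffordVec Q v = algebraMap ℂ _ (Q v : ℂ) := by
  rw [cliffordVec_apply, CliffordAlgebra.ι_sq_scalar, Q.baseChange_one_tmul, Complex.coe_algebraMap]

theorem cliffordVec_mul_cliffordVec_of_isOrtho {v w : V} (h : Q.IsOrtho v w) :
    cliffordVec Q v * cliffordVec Q w = -(cliffordVec Q w * cliffordVec Q v) := by
  refine CliffordAlgebra.ι_mul_ι_comm_of_isOrtho ?_
  rw [QuadraticMap.isOrtho_def, mk_apply, mk_apply, ← tmul_add, Q.baseChange_one_tmul,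
    Q.baseChange_one_tmul, Q.baseChange_one_tmul, QuadraticMap.isOrtho_def.mp h, map_add]

variable {S : Type*} [AddCommGroup S] [Module ℂ S] [Module (CliffordAlgebra (Q.baseChange ℂ)) S]

def IsCliffordSkew (B : S →ₗ⋆[ℂ] S →ₗ[ℂ] ℂ) : Prop :=
  ∀ v s t, B (cliffordVec Q v • s) t = -B s (cliffordVec Q v • t)

variable [IsScalarTower ℂ (CliffordAlgebra (Q.baseChange ℂ)) S]

theorem isCliffordSkew_of_span_eq_top {B : S →ₗ⋆[ℂ] S →ₗ[ℂ] ℂ} {X : Set V}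
    (hX : Submodule.span ℝ X = ⊤)
    (hB : ∀ v ∈ X, ∀ s t, B (cliffordVec Q v • s) t = -B s (cliffordVec Q v • t)) :
    IsCliffordSkew Q B := by
  intro v
  have hv : v ∈ Submodule.span ℝ X := hX ▸ Submodule.mem_top
  induction hv using Submodule.span_induction with
  | mem v hv => exact hB v hv
  | zero => simp
  | add v w _ _ hv hw =>
    intro s t
    simp only [map_add, add_smul, LinearMap.add_apply, hv, hw, neg_add]
  | smul r v _ hv =>
    intro s t
    simp [← Complex.coe_smul, smul_assoc, hv]

theorem exists_adjoint_clifford (a : CliffordAlgebra (Q.baseChange ℂ)) :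
    ∃ b : CliffordAlgebra (Q.baseChange ℂ), ∀ B : S →ₗ⋆[ℂ] S →ₗ[ℂ] ℂ, IsCliffordSkew Q B →
      ∀ s t, B (a • s) t = B s (b • t) := by
  induction a using CliffordAlgebra.induction with
  | algebraMap c => exact ⟨algebraMap ℂ _ (conj c), fun B _ s t => by simp [algebraMap_smul]⟩
  | ι m =>
    induction m using TensorProduct.induction_on with
    | zero => exact ⟨0, fun B _ s t => by simp⟩
    | tmul c v =>
      refine ⟨-(conj c • cliffordVec Q v), fun B hB s t => ?_⟩
      have hcv : CliffordAlgebra.ι (Q.baseChange ℂ) (c ⊗ₜ[ℝ] v) = c • cliffordVec Q v := by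
        rw [cliffordVec_apply, ← map_smul, TensorProduct.smul_tmul', smul_eq_mul, mul_one]
      simp [hcv, smul_assoc, hB v]
    | add m₁ m₂ h₁ h₂ =>
      obtain ⟨b₁, hb₁⟩ := h₁
      obtain ⟨b₂, hb₂⟩ := h₂
      exact ⟨b₁ + b₂, fun B hB s t => by simp [add_smul, hb₁ B hB, hb₂ B hB]⟩
  | mul a₁ a₂ h₁ h₂ =>
    obtain ⟨b₁, hb₁⟩ := h₁
    obtain ⟨b₂, hb₂⟩ := h₂
    exact ⟨b₂ * b₁, fun B hB s t => by rw [mul_smul, hb₁ B hB, hb₂ B hB, mul_smul]⟩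
  | add a₁ a₂ h₁ h₂ =>
    obtain ⟨b₁, hb₁⟩ := h₁
    obtain ⟨b₂, hb₂⟩ := h₂
    exact ⟨b₁ + b₂, fun B hB s t => by simp [add_smul, hb₁ B hB, hb₂ B hB]⟩

theorem isAdjointPair_imp_of_surjective
    (hS : Function.Surjective (Algebra.lsmul ℂ ℂ S :
      CliffordAlgebra (Q.baseChange ℂ) →ₐ[ℂ] Module.End ℂ S))
    {B B' : S →ₗ⋆[ℂ] S →ₗ[ℂ] ℂ} (hB : IsHermitianPosDef B) (hBc : IsCliffordSkew Q B)
    (hB'c : IsCliffordSkew Q B') (E F : Module.End ℂ S)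
    (hEF : ∀ s t, B (E s) t = B s (F t)) (s t : S) : B' (E s) t = B' s (F t) := by
  obtain ⟨a, rfl⟩ := hS E
  obtain ⟨b, hb⟩ := exists_adjoint_clifford Q (S := S) a
  have hF (t : S) : F t = b • t :=
    hB.eq_of_forall_apply_eq fun s => (hEF s t).symm.trans (hb B hBc s t)
  rw [hF]
  exact hb B' hB'c s t

end Clifford

section Euclidean

variable {V : Type*} [NormedAddCommGroup V] [InnerProductSpace ℝ V] {Q : QuadraticForm ℝ V}
  {S : Type*} [AddCommGroup S] [Module ℂ S] [Module (CliffordAlgebra (Q.baseChange ℂ)) S]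

theorem exists_isHermitianPosDef_isCliffordSkew [FiniteDimensional ℝ V]
    [IsScalarTower ℂ (CliffordAlgebra (Q.baseChange ℂ)) S] [FiniteDimensional ℂ S]
    (hQ : ∀ v : V, Q v = -‖v‖ ^ 2) :
    ∃ B : S →ₗ⋆[ℂ] S →ₗ[ℂ] ℂ, IsHermitianPosDef B ∧ IsCliffordSkew Q B := by
  let e := stdOrthonormalBasis ℝ V
  let f i : Module.End ℂ S := Algebra.lsmul ℂ ℂ S (cliffordVec Q (e i))
  have hsq i : f i * f i = -1 := by
    simp [f, ← map_mul, cliffordVec_mul_self, hQ, e.orthonormal.1 i]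
  have hanti i j (hij : i ≠ j) : f i * f j = -(f j * f i) := by
    have hortho : Q.IsOrtho (e i) (e j) := by
      rw [QuadraticMap.isOrtho_def, hQ, hQ, hQ, norm_add_sq_real, e.orthonormal.2 hij]
      ring
    simp [f, ← map_mul, cliffordVec_mul_cliffordVec_of_isOrtho Q hortho]
  obtain ⟨B₀, hB₀⟩ := exists_isHermitianPosDef (S := S)
  obtain ⟨B, hB, hskew⟩ := hB₀.exists_forall_skew hsq hanti
  refine ⟨B, hB, isCliffordSkew_of_span_eq_top Q (X := Set.range e) ?_ ?_⟩
  · simpa using e.toBasis.span_eq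
  · rintro _ ⟨i, rfl⟩
    exact hskew i

variable (Q S)

theorem isSkewAdjointHermitianInner_iff {h : S → S → ℂ} :
    IsSkewAdjointHermitianInner Q S h ↔ ∃ B : S →ₗ⋆[ℂ] S →ₗ[ℂ] ℂ,
      IsHermitianPosDef B ∧ IsCliffordSkew Q B ∧ (fun s t => B s t) = h := by
  constructor
  · rintro ⟨hadd, hsmul, hsymm, hpos, hskew⟩
    refine ⟨LinearMap.mk₂'ₛₗ _ _ h hadd hsmul (fun s t u => ?_) (fun c s t => ?_),
      ⟨⟨fun s t => (hsymm s t).symm⟩, hpos⟩, hskew, rfl⟩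
    · rw [hsymm, hadd, map_add, ← hsymm, ← hsymm]
    · rw [hsymm, hsmul, map_mul, Complex.conj_conj, ← hsymm, smul_eq_mul, RingHom.id_apply]
  · rintro ⟨B, ⟨hsymm, hpos⟩, hskew, rfl⟩
    exact ⟨fun s t u => by simp, fun c s t => by simp, fun s t => (hsymm.eq s t).symm, hpos,
      hskew⟩

end Euclidean

theorem spinor_hermitian_exists_unique_general
    (V : Type*) [NormedAddCommGroup V] [InnerProductSpace ℝ V] [FiniteDimensional ℝ V]
    (Q : QuadraticForm ℝ V) (hQ : ∀ v : V, Q v = -‖v‖ ^ 2)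
    (S : Type*) [AddCommGroup S] [Module ℂ S]
    [Module (CliffordAlgebra (Q.baseChange ℂ)) S]
    [IsScalarTower ℂ (CliffordAlgebra (Q.baseChange ℂ)) S] [FiniteDimensional ℂ S]
    (hS : Function.Bijective
      ⇑(Algebra.lsmul ℂ ℂ S :
        CliffordAlgebra (Q.baseChange ℂ) →ₐ[ℂ] Module.End ℂ S)) :
    ∃ h : S → S → ℂ, IsSkewAdjointHermitianInner Q S h ∧
      ∀ h' : S → S → ℂ, IsSkewAdjointHermitianInner Q S h' →
        ∃ r : ℝ, 0 < r ∧ ∀ s t : S, h' s t = (r : ℂ) * h s t := by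
  obtain ⟨B, hB, hBc⟩ := exists_isHermitianPosDef_isCliffordSkew (S := S) hQ
  refine ⟨fun s t => B s t, (isSkewAdjointHermitianInner_iff Q S).mpr ⟨B, hB, hBc, rfl⟩, ?_⟩
  intro h' hh'
  obtain ⟨B', hB', hB'c, rfl⟩ := (isSkewAdjointHermitianInner_iff Q S).mp hh'
  exact hB.exists_pos_eq_smul_of_isAdjointPair_imp hB'
    (isAdjointPair_imp_of_surjective Q hS.2 hB hBc hB'c)

/-- **Invariant Hermitian structure on the spinor module** (Proposition 5.1).
On the spinor module `S` of `Cl(V) ⊗ ℂ` (a finite-dimensional complex module whose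
structure homomorphism to `End_ℂ(S)` is bijective) there exists a positive-definite
Hermitian inner product making every Clifford action `c(v)`, `v ∈ V`, skew-adjoint,
and any two such inner products differ by a positive real scalar. -/
theorem spinor_hermitian_exists_unique
    (V : Type*) [NormedAddCommGroup V] [InnerProductSpace ℝ V] [FiniteDimensional ℝ V]
    (ℓ : ℕ) (hdim : Module.finrank ℝ V = 2 * ℓ)
    (Q : QuadraticForm ℝ V) (hQ : ∀ v : V, Q v = -‖v‖ ^ 2)
    (S : Type*) [AddCommGroup S] [Module ℂ S]
    [Module (CliffordAlgebra (Q.baseChange ℂ)) S]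
    [IsScalarTower ℂ (CliffordAlgebra (Q.baseChange ℂ)) S] [FiniteDimensional ℂ S]
    (hS : Function.Bijective
      ⇑(Algebra.lsmul ℂ ℂ S :
        CliffordAlgebra (Q.baseChange ℂ) →ₐ[ℂ] Module.End ℂ S)) :
    ∃ h : S → S → ℂ, IsSkewAdjointHermitianInner Q S h ∧
      ∀ h' : S → S → ℂ, IsSkewAdjointHermitianInner Q S h' →
        ∃ r : ℝ, 0 < r ∧ ∀ s t : S, h' s t = (r : ℂ) * h s t :=
  spinor_hermitian_exists_unique_general V Q hQ S hS
end

section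
/- Let V be an n-dimensional real inner product space and Q(v) = -‖v‖². Let e, f : Fin n → V be two orthonormal bases whose change-of-basis matrix has positive determinant (i.e. the two bases induce the same orientation of V). Then the ordered products in the Clifford algebra coincide: ι(e₁)·ι(e₂)⋯ι(eₙ) = ι(f₁)·ι(f₂)⋯ι(fₙ) in Cl(V). -/
/-!
In characteristic not two the Clifford algebra is isomorphic, as a module, to the exterior
algebra (Bourbaki's change of form `CliffordAlgebra.equivExterior`), and this isomorphism sends
a product of pairwise `Q`-orthogonal vectors to their wedge product. Wedge products are
alternating, so `ι(f₁)⋯ι(fₙ) = det_e(f) • ι(e₁)⋯ι(eₙ)`; for orthonormal bases `e`, `f` of the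
same orientation, `det_e(f) = 1`.
-/

open CliffordAlgebra
open scoped RealInnerProductSpace

theorem AlternatingMap.apply_eq_basis_det_smul {R M N : Type*} [CommRing R] [AddCommGroup M]
    [Module R M] [AddCommGroup N] [Module R N] {ι : Type*} [Fintype ι] [DecidableEq ι]
    (b : Module.Basis ι R M) (φ : M [⋀^ι]→ₗ[R] N) (v : ι → M) : φ v = b.det v • φ b := by
  suffices φ = (LinearMap.toSpanSingleton R N (φ b)).compAlternatingMap b.det from
    congr($this v)
  refine b.ext_alternating fun w hw => ?_
  let σ : Equiv.Perm ι := Equiv.ofBijective w (Finite.injective_iff_bijective.1 hw)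
  have hσ : (fun i => b (w i)) = b ∘ σ := rfl
  rw [hσ]
  simp [AlternatingMap.map_perm, Module.Basis.det_self]

section Contraction

variable {R M : Type*} [CommRing R] [AddCommGroup M] [Module R M] {Q Q' : QuadraticForm R M}

theorem contractLeft_prod_map_ι_eq_zero (d : Module.Dual R M) {l : List M}
    (hl : ∀ v ∈ l, d v = 0) : contractLeft d (l.map (ι Q)).prod = 0 := by
  induction l with
  | nil => simp
  | cons a t ih =>
    rw [List.map_cons, List.prod_cons, contractLeft_ι_mul, ih fun v hv => hl v (.tail _ hv),
      hl a List.mem_cons_self, zero_smul, mul_zero, sub_zero]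

theorem changeForm_prod_map_ι {B : LinearMap.BilinForm R M} (h : B.toQuadraticMap = Q' - Q)
    {l : List M} (hl : l.Pairwise fun a b => B a b = 0) :
    changeForm h (l.map (ι Q)).prod = (l.map (ι Q')).prod := by
  induction l with
  | nil => simp
  | cons a t ih =>
    rw [List.pairwise_cons] at hl
    rw [List.map_cons, List.prod_cons, changeForm_ι_mul, ih hl.2,
      contractLeft_prod_map_ι_eq_zero (B a) hl.1, sub_zero, List.map_cons, List.prod_cons]

variable [Invertible (2 : R)]

theorem equivExterior_prod_ofFn_ι {n : ℕ} {v : Fin n → M}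
    (hv : Pairwise fun i j => Q.IsOrtho (v i) (v j)) :
    equivExterior Q (List.ofFn fun i => ι Q (v i)).prod = ExteriorAlgebra.ιMulti R n v := by
  have hortho : (List.ofFn v).Pairwise fun a b => QuadraticMap.associated (-Q) a b = 0 :=
    List.pairwise_ofFn.2 fun i j hij => by
      simp [QuadraticMap.associated_apply, QuadraticMap.isOrtho_def.1 (hv hij.ne)]
  rw [ExteriorAlgebra.ιMulti_apply]
  have h := changeForm_prod_map_ι changeForm.associated_neg_proof hortho
  simp only [List.map_ofFn, Function.comp_def] at h
  exact h

theorem prod_ofFn_ι_eq_basis_det_smul {n : ℕ} (b : Module.Basis (Fin n) R M) {v : Fin n → M}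
    (hb : Pairwise fun i j => Q.IsOrtho (b i) (b j))
    (hv : Pairwise fun i j => Q.IsOrtho (v i) (v j)) :
    (List.ofFn fun i => ι Q (v i)).prod = b.det v • (List.ofFn fun i => ι Q (b i)).prod := by
  apply (equivExterior Q).injective
  rw [map_smul, equivExterior_prod_ofFn_ι hv, equivExterior_prod_ofFn_ι hb]
  exact AlternatingMap.apply_eq_basis_det_smul b _ v

end Contraction

theorem QuadraticMap.isOrtho_of_inner_eq_zero {V : Type*} [NormedAddCommGroup V]
    [InnerProductSpace ℝ V] {Q : QuadraticForm ℝ V} (hQ : ∀ v : V, Q v = -‖v‖ ^ 2) {x y : V}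
    (h : ⟪x, y⟫ = 0) : Q.IsOrtho x y := by
  rw [QuadraticMap.isOrtho_def, hQ, hQ, hQ, norm_add_sq_real, h]
  ring

theorem chirality_element_well_defined_general
    (V : Type*) [NormedAddCommGroup V] [InnerProductSpace ℝ V]
    (n : ℕ) (e f : OrthonormalBasis (Fin n) ℝ V)
    (hdet : 0 < e.toBasis.det ⇑f)
    (Q : QuadraticForm ℝ V) (hQ : ∀ v : V, Q v = -‖v‖ ^ 2) :
    (List.ofFn fun i => CliffordAlgebra.ι Q (e i)).prod =
      (List.ofFn fun i => CliffordAlgebra.ι Q (f i)).prod := by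
  have hdet_one : e.toBasis.det f = 1 :=
    (e.det_to_matrix_orthonormalBasis_real f).resolve_right fun h => by linarith
  have hortho (g : OrthonormalBasis (Fin n) ℝ V) : Pairwise fun i j => Q.IsOrtho (g i) (g j) :=
    fun _ _ hij => QuadraticMap.isOrtho_of_inner_eq_zero hQ (g.orthonormal.2 hij)
  have h := prod_ofFn_ι_eq_basis_det_smul e.toBasis (e.coe_toBasis ▸ hortho e) (hortho f)
  rw [hdet_one, one_smul, e.coe_toBasis] at h
  exact h.symm

/-- **The chirality element depends only on the orientation** (Section 5.1).
If `e` and `f` are two orthonormal bases of an `n`-dimensional real inner product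
space `V` whose change-of-basis matrix has positive determinant, and `Q v = -‖v‖²`,
then the ordered products `ι(e₁)⋯ι(eₙ)` and `ι(f₁)⋯ι(fₙ)` coincide in `Cl(V)`. -/
theorem chirality_element_well_defined
    (V : Type*) [NormedAddCommGroup V] [InnerProductSpace ℝ V] [FiniteDimensional ℝ V]
    (n : ℕ) (e f : OrthonormalBasis (Fin n) ℝ V)
    (hdet : 0 < e.toBasis.det ⇑f)
    (Q : QuadraticForm ℝ V) (hQ : ∀ v : V, Q v = -‖v‖ ^ 2) :
    (List.ofFn fun i => CliffordAlgebra.ι Q (e i)).prod =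
      (List.ofFn fun i => CliffordAlgebra.ι Q (f i)).prod :=
  chirality_element_well_defined_general V n e f hdet Q hQ
end

section
/- Let n ≥ 1 and let K be a topologically closed subgroup of the unitary group U(n) of n×n complex matrices. Suppose that for every nonzero x ∈ ℂⁿ there exists a skew-Hermitian matrix A (Aᴴ = -A) with exp(tA) ∈ K for all t ∈ ℝ and ⟨A·x, x⟩ ≠ 0. Then every polynomial function p : ℂⁿ → ℂ (the evaluation of a multivariate polynomial in the n coordinates) satisfying p(g·x) = p(x) for all g ∈ K and all x ∈ ℂⁿ is constant. -/
/-!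
A `K`-invariant polynomial `P` is also invariant under `exp (z • A)` for every complex `z`,
since `z ↦ P (exp (z • A) x)` is entire and constant on the real line. Hence every level set
of `P` is closed and invariant under these complexified one-parameter groups. Let `y` be a point
of minimal Hermitian norm on such a level set. If `y ≠ 0`, the moment-map hypothesis gives an `A`
with `⟪y, A y⟫ ≠ 0`, and moving from `y` along `exp (z • A) y` in a suitable complex direction
decreases the norm to first order. So `y = 0`: every level set of `P` contains `0`.
-/

open Matrix NormedSpace Filter Topology

theorem inner_eq_zero_of_isMinOn_norm {E : Type*} [NormedAddCommGroup E] [InnerProductSpace ℝ E]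
    {s : Set E} {y v : E} {γ : ℝ → E} (hy : IsMinOn (‖·‖) s y) (hγs : ∀ t, γ t ∈ s)
    (hγ : HasDerivAt γ v 0) (hγ0 : γ 0 = y) : inner ℝ y v = 0 := by
  have hmin : IsLocalMin (‖γ ·‖ ^ 2) 0 := Eventually.of_forall fun t => by
    simp only [hγ0]
    gcongr
    exact hy (hγs t)
  have := hmin.hasDerivAt_eq_zero hγ.norm_sq
  rw [hγ0] at this
  linarith

theorem IsClosed.zero_mem_of_forall_exists_curve {E : Type*} [NormedAddCommGroup E]
    [InnerProductSpace ℂ E] [ProperSpace E] {s : Set E} (hs : IsClosed s) (hne : s.Nonempty)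
    (h : ∀ y ∈ s, y ≠ 0 → ∃ γ : ℂ → E, ∃ v, (∀ z, γ z ∈ s) ∧ HasDerivAt γ v 0 ∧ γ 0 = y ∧
      inner ℂ y v ≠ 0) :
    (0 : E) ∈ s := by
  let _ := InnerProductSpace.complexToReal (G := E)
  obtain ⟨y, hys, hy⟩ := hs.exists_infDist_eq_dist hne 0
  have hmin : IsMinOn (‖·‖) s y := fun w hw => by
    have := Metric.infDist_le_dist_of_mem (x := 0) hw
    rwa [hy, dist_zero_left, dist_zero_left] at this
  by_contra h0
  obtain ⟨γ, v, hγs, hγ, hγ0, hv⟩ := h y hys (by rintro rfl; exact h0 hys)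
  set w := inner ℂ y v
  -- Along the real line through `0` in the direction `conj w`, `‖γ‖²` has derivative `2 ‖w‖²`.
  have hdir : HasDerivAt (fun t : ℝ => (t : ℂ) * star w) (star w) 0 := by
    simpa using (Complex.ofRealCLM.hasDerivAt (x := 0)).mul_const (star w)
  have hγ' : HasDerivAt γ v ((0 : ℝ) * star w) := by simpa using hγ
  have hinner : inner ℝ y (star w • v) = ‖w‖ ^ 2 := by
    rw [real_inner_eq_re_inner ℂ, inner_smul_right, Complex.star_def, Complex.conj_mul',
      ← Complex.ofReal_pow]
    rfl
  have := inner_eq_zero_of_isMinOn_norm hmin (fun t => hγs _) (hγ'.scomp 0 hdir)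
    (by simpa using hγ0)
  rw [hinner] at this
  exact hv (by simpa using this)

theorem Differentiable.apply_eq_of_forall_ofReal {E : Type*} [NormedAddCommGroup E]
    [NormedSpace ℂ E] [CompleteSpace E] {f : ℂ → E} (hf : Differentiable ℂ f) {c : E}
    (h : ∀ t : ℝ, f t = c) (z : ℂ) : f z = c := by
  have hreal : Tendsto ((↑) : ℝ → ℂ) (𝓝[≠] 0) (𝓝[≠] 0) :=
    tendsto_nhdsWithin_of_tendsto_nhds_of_eventually_within _
      (Complex.continuous_ofReal.tendsto' 0 0 Complex.ofReal_zero |>.mono_left nhdsWithin_le_nhds)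
      (eventually_nhdsWithin_of_forall fun t ht => by simpa using ht)
  have := AnalyticOnNhd.eq_of_frequently_eq (fun w _ => hf.analyticAt w)
    (analyticOnNhd_const (v := c)) (hreal.frequently (Frequently.of_forall h))
  exact congrFun this z

open scoped Norms.Operator in
theorem hasDerivAt_exp_smul_mulVec {𝕂 m : Type*} [RCLike 𝕂] [Fintype m] [DecidableEq m]
    (A : Matrix m m 𝕂) (v : m → 𝕂) (z : 𝕂) :
    HasDerivAt (fun w : 𝕂 => exp (w • A) *ᵥ v) ((exp (z • A) * A) *ᵥ v) z := by
  have hexp := hasDerivAt_exp_smul_const (𝕂 := 𝕂) A z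
  exact (LinearMap.toContinuousLinearMap ((mulVecBilin 𝕂 𝕂).flip v)).hasFDerivAt.comp_hasDerivAt z
    hexp

theorem MvPolynomial.eval_exp_smul_mulVec {m : Type*} [Fintype m] [DecidableEq m]
    {P : MvPolynomial m ℂ} {A : Matrix m m ℂ}
    (h : ∀ (t : ℝ) v, eval (exp (t • A) *ᵥ v) P = eval v P) (z : ℂ) (v : m → ℂ) :
    eval (exp (z • A) *ᵥ v) P = eval v P := by
  have hP : Differentiable ℂ (fun x : m → ℂ => eval x P) := fun x =>
    (AnalyticOnNhd.eval_continuousLinearMap (.id ℂ (m → ℂ)) P x trivial).differentiableAt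
  refine Differentiable.apply_eq_of_forall_ofReal (f := fun w : ℂ => eval (exp (w • A) *ᵥ v) P)
    (fun w => hP.differentiableAt.comp w (hasDerivAt_exp_smul_mulVec A v w).differentiableAt)
    (fun t => ?_) z
  simpa only [Complex.coe_smul] using h t v

theorem invariant_polynomials_constant_general
    (n : ℕ)
    (K : Set (Matrix (Fin n) (Fin n) ℂ))
    (hmoment : ∀ x : Fin n → ℂ, x ≠ 0 →
      ∃ A : Matrix (Fin n) (Fin n) ℂ, Aᴴ = -A ∧
        (∀ t : ℝ, NormedSpace.exp (t • A) ∈ K) ∧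
        (∑ i, (starRingEnd ℂ) (A.mulVec x i) * x i) ≠ 0)
    (P : MvPolynomial (Fin n) ℂ)
    (hP : ∀ g ∈ K, ∀ x : Fin n → ℂ,
      MvPolynomial.eval (g.mulVec x) P = MvPolynomial.eval x P) :
    ∀ x y : Fin n → ℂ, MvPolynomial.eval x P = MvPolynomial.eval y P := by
  suffices h : ∀ x, MvPolynomial.eval x P = MvPolynomial.eval 0 P from
    fun x y => (h x).trans (h y).symm
  intro x
  -- The level set lives in `EuclideanSpace`: the sup norm of `Fin n → ℂ` is not smooth.
  let s : Set (EuclideanSpace ℂ (Fin n)) :=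
    {w | MvPolynomial.eval w.ofLp P = MvPolynomial.eval x P}
  have hs : IsClosed s :=
    isClosed_eq ((MvPolynomial.continuous_eval P).comp (PiLp.continuous_ofLp 2 _)) continuous_const
  refine (hs.zero_mem_of_forall_exists_curve ⟨WithLp.toLp 2 x, rfl⟩ fun y hy hy0 => ?_).symm
  obtain ⟨A, -, hAK, hA⟩ := hmoment y.ofLp (by simpa using hy0)
  refine ⟨fun z => WithLp.toLp 2 (exp (z • A) *ᵥ y.ofLp), WithLp.toLp 2 (A *ᵥ y.ofLp),
    fun z => ?_, ?_, by simp, ?_⟩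
  · exact (MvPolynomial.eval_exp_smul_mulVec (fun t => hP _ (hAK t)) z _).trans hy
  · have hd := hasDerivAt_exp_smul_mulVec A y.ofLp 0
    rw [zero_smul, exp_zero, one_mul] at hd
    exact (EuclideanSpace.equiv (Fin n) ℂ).symm.hasFDerivAt.comp_hasDerivAt 0 hd
  · rw [← inner_conj_symm, map_ne_zero]
    simpa [PiLp.inner_apply, mul_comm] using hA

/-- **Invariant polynomials when `Φ⁻¹(0) = {0}`** (Proposition 12.9, second claim).
Let `K` be a topologically closed subgroup of the unitary group `U(n)`. If for every
nonzero `x ∈ ℂⁿ` there is a skew-Hermitian matrix `A` with `exp(tA) ∈ K` for all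
`t ∈ ℝ` and `⟨A·x, x⟩ ≠ 0`, then every `K`-invariant polynomial function on `ℂⁿ`
is constant. -/
theorem invariant_polynomials_constant
    (n : ℕ) (hn : 1 ≤ n)
    (K : Set (Matrix (Fin n) (Fin n) ℂ))
    (hKclosed : IsClosed K)
    (hKunitary : ∀ g ∈ K, g ∈ Matrix.unitaryGroup (Fin n) ℂ)
    (hone : (1 : Matrix (Fin n) (Fin n) ℂ) ∈ K)
    (hmul : ∀ g ∈ K, ∀ h ∈ K, g * h ∈ K)
    (hinv : ∀ g ∈ K, star g ∈ K)
    (hmoment : ∀ x : Fin n → ℂ, x ≠ 0 →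
      ∃ A : Matrix (Fin n) (Fin n) ℂ, Aᴴ = -A ∧
        (∀ t : ℝ, NormedSpace.exp (t • A) ∈ K) ∧
        (∑ i, (starRingEnd ℂ) (A.mulVec x i) * x i) ≠ 0)
    (P : MvPolynomial (Fin n) ℂ)
    (hP : ∀ g ∈ K, ∀ x : Fin n → ℂ,
      MvPolynomial.eval (g.mulVec x) P = MvPolynomial.eval x P) :
    ∀ x y : Fin n → ℂ, MvPolynomial.eval x P = MvPolynomial.eval y P :=
  invariant_polynomials_constant_general n K hmoment P hP
end
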